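/- arXiv:1306.2003 — 3 statements merged into one kernel-verified Lean document; each statement's English description precedes it below -/
import Mathlib

section
/- Let m ≥ 1 be an integer, L ≥ m a real number, and Σ₁, Σ₂ m×m Hermitian positive definite complex matrices. Then the matrix Σ_h := ((Σ₁⁻¹ + Σ₂⁻¹)/2)⁻¹ is Hermitian positive definite, and for every m×m Hermitian positive definite complex matrix Z one has the pointwise identity √(f(Z;Σ₁,L) · f(Z;Σ₂,L)) = [det(Σ_h) / √(det(Σ₁)·det(Σ₂))]^L · f(Z;Σ_h,L). (This identity underlies the closed-form Bhattacharyya and Hellinger distances between scaled complex Wishart laws.) -/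
open Matrix ComplexOrder

/-- Real (positive) determinant of a Hermitian positive definite complex matrix. -/
noncomputable def pdet {m : ℕ} (A : Matrix (Fin m) (Fin m) ℂ) : ℝ := A.det.re

/-- Real trace. -/
noncomputable def rtrace {m : ℕ} (A : Matrix (Fin m) (Fin m) ℂ) : ℝ := A.trace.re

/-- Multivariate gamma function Γ_m(L) = π^{m(m−1)/2} ∏_{i=0}^{m−1} Γ(L−i). -/
noncomputable def mGamma (m : ℕ) (L : ℝ) : ℝ :=
  Real.pi ^ (m * (m - 1) / 2) * ∏ i ∈ Finset.range m, Real.Gamma (L - i)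

/-- Scaled complex Wishart density. -/
noncomputable def wdens (m : ℕ) (L : ℝ) (S Z : Matrix (Fin m) (Fin m) ℂ) : ℝ :=
  L ^ ((m : ℝ) * L) * pdet Z ^ (L - (m : ℝ)) * Real.exp (-(L * rtrace (S⁻¹ * Z)))
    / (pdet S ^ L * mGamma m L)

/-! The trace term is linear in `S⁻¹`, so the two exponentials multiply to the square of the
one for `Sh`, whose inverse is the average of `S₁⁻¹` and `S₂⁻¹`; the determinant factors are
absorbed by the prefactor `(pdet Sh / √(pdet S₁ * pdet S₂)) ^ L`. This makes the product of the
two densities a perfect square, and the square root is the stated expression because all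
densities are nonnegative once `m ≤ L` (so that every `Γ(L - i)` in `Γ_m(L)` is positive). -/

lemma pdet_pos {m : ℕ} {A : Matrix (Fin m) (Fin m) ℂ} (hA : A.PosDef) : 0 < pdet A :=
  (Complex.lt_def.mp hA.det_pos).1

lemma mGamma_pos {m : ℕ} {L : ℝ} (hL : (m : ℝ) - 1 < L) : 0 < mGamma m L := by
  refine mul_pos (pow_pos Real.pi_pos _) (Finset.prod_pos fun i hi => Real.Gamma_pos_of_pos ?_)
  have : (i : ℝ) + 1 ≤ m := by exact_mod_cast Finset.mem_range.mp hi
  linarith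

lemma wdens_nonneg {m : ℕ} {L : ℝ} (hL : (m : ℝ) ≤ L) {S Z : Matrix (Fin m) (Fin m) ℂ}
    (hS : S.PosDef) (hZ : Z.PosDef) : 0 ≤ wdens m L S Z := by
  have hΓ := mGamma_pos (m := m) (L := L) (by linarith)
  have hS_det := pdet_pos hS
  have hZ_det := pdet_pos hZ
  have hL₀ : (0 : ℝ) ≤ L := le_trans (Nat.cast_nonneg m) hL
  unfold wdens
  positivity

lemma rtrace_add_mul {m : ℕ} (A B Z : Matrix (Fin m) (Fin m) ℂ) :
    rtrace (A * Z) + rtrace (B * Z) = 2 * rtrace (((2 : ℂ)⁻¹ • (A + B)) * Z) := by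
  simp only [rtrace, Matrix.smul_mul, trace_smul, add_mul, trace_add, smul_eq_mul,
    Complex.mul_re, Complex.add_re]
  norm_num
  ring

lemma wdens_mul_wdens {m : ℕ} (L : ℝ) {S₁ S₂ Sh : Matrix (Fin m) (Fin m) ℂ}
    (hinv : Sh⁻¹ = ((2 : ℂ))⁻¹ • (S₁⁻¹ + S₂⁻¹))
    (h₁ : 0 < pdet S₁) (h₂ : 0 < pdet S₂) (hh : 0 < pdet Sh) (Z : Matrix (Fin m) (Fin m) ℂ) :
    wdens m L S₁ Z * wdens m L S₂ Z
      = ((pdet Sh / √(pdet S₁ * pdet S₂)) ^ L * wdens m L Sh Z) ^ 2 := by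
  set s := √(pdet S₁ * pdet S₂)
  have hs : 0 < s := Real.sqrt_pos.mpr (mul_pos h₁ h₂)
  have hsL : s ^ L * s ^ L = pdet S₁ ^ L * pdet S₂ ^ L := by
    rw [← Real.mul_rpow hs.le hs.le, Real.mul_self_sqrt (mul_pos h₁ h₂).le,
      Real.mul_rpow h₁.le h₂.le]
  have hexp : Real.exp (-(L * rtrace (S₁⁻¹ * Z))) * Real.exp (-(L * rtrace (S₂⁻¹ * Z)))
      = Real.exp (-(L * rtrace (Sh⁻¹ * Z))) ^ 2 := by
    rw [← Real.exp_add, ← Real.exp_nat_mul, hinv]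
    congr 1
    linear_combination (-L) * rtrace_add_mul S₁⁻¹ S₂⁻¹ Z
  have hhL := Real.rpow_pos_of_pos hh L
  have hsL_pos := Real.rpow_pos_of_pos hs L
  unfold wdens
  set c := L ^ ((m : ℝ) * L) * pdet Z ^ (L - m)
  set e := Real.exp (-(L * rtrace (Sh⁻¹ * Z)))
  rw [Real.div_rpow hh.le hs.le]
  field_simp
  linear_combination (c / mGamma m L) ^ 2 * ((s ^ L) ^ 2 * hexp + e ^ 2 * hsL)

theorem stmt1_general (m : ℕ) (L : ℝ) (hL : (m : ℝ) ≤ L)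
    (S₁ S₂ : Matrix (Fin m) (Fin m) ℂ) (h₁ : S₁.PosDef) (h₂ : S₂.PosDef)
    (Sh : Matrix (Fin m) (Fin m) ℂ)
    (hSh : Sh = (((2 : ℂ))⁻¹ • (S₁⁻¹ + S₂⁻¹))⁻¹) :
    Sh.PosDef ∧
    ∀ Z : Matrix (Fin m) (Fin m) ℂ, Z.PosDef →
      Real.sqrt (wdens m L S₁ Z * wdens m L S₂ Z)
        = (pdet Sh / Real.sqrt (pdet S₁ * pdet S₂)) ^ L * wdens m L Sh Z := by
  have hA : (((2 : ℂ))⁻¹ • (S₁⁻¹ + S₂⁻¹)).PosDef := (h₁.inv.add h₂.inv).smul (by norm_num)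
  have hSh_pd : Sh.PosDef := hSh ▸ hA.inv
  have hinv : Sh⁻¹ = ((2 : ℂ))⁻¹ • (S₁⁻¹ + S₂⁻¹) := by
    rw [hSh, nonsing_inv_nonsing_inv _ ((isUnit_iff_isUnit_det _).mp hA.isUnit)]
  refine ⟨hSh_pd, fun Z hZ => ?_⟩
  rw [wdens_mul_wdens L hinv (pdet_pos h₁) (pdet_pos h₂) (pdet_pos hSh_pd) Z, Real.sqrt_sq]
  have hSh_det := pdet_pos hSh_pd
  have hw := wdens_nonneg hL hSh_pd hZ
  positivity

theorem stmt1 (m : ℕ) (hm : 1 ≤ m) (L : ℝ) (hL : (m : ℝ) ≤ L)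
    (S₁ S₂ : Matrix (Fin m) (Fin m) ℂ) (h₁ : S₁.PosDef) (h₂ : S₂.PosDef)
    (Sh : Matrix (Fin m) (Fin m) ℂ)
    (hSh : Sh = (((2 : ℂ))⁻¹ • (S₁⁻¹ + S₂⁻¹))⁻¹) :
    Sh.PosDef ∧
    ∀ Z : Matrix (Fin m) (Fin m) ℂ, Z.PosDef →
      Real.sqrt (wdens m L S₁ Z * wdens m L S₂ Z)
        = (pdet Sh / Real.sqrt (pdet S₁ * pdet S₂)) ^ L * wdens m L Sh Z :=
  stmt1_general m L hL S₁ S₂ h₁ h₂ Sh hSh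
end

section
/- Let m ≥ 1 be an integer, L > 0 a real number, and Σ₁, Σ₂ m×m Hermitian positive definite complex matrices. Define the closed-form Hellinger distance d_H(Σ₁,Σ₂) = 1 − [det((2⁻¹(Σ₁⁻¹+Σ₂⁻¹))⁻¹) / √(det(Σ₁)·det(Σ₂))]^L, with determinants taken as positive reals. Then 0 ≤ d_H(Σ₁,Σ₂) < 1, and d_H(Σ₁,Σ₂) = 0 if and only if Σ₁ = Σ₂. In particular the Hellinger distance between scaled complex Wishart laws is confined to the interval [0,1]. -/
/-!
With `A = Σ₁⁻¹` and `B = Σ₂⁻¹`, the number raised to the power `L` is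
`√(det A · det B) / det ((A + B) / 2)`. Writing `A = R⋆R` and `B = R⋆ M R` with `M` positive
definite turns the determinant AM–GM inequality `det A · det B ≤ det ((A + B) / 2) ^ 2` into
`det M ≤ det ((1 + M) / 2) ^ 2`, which is the scalar inequality `μ ≤ ((1 + μ) / 2) ^ 2` for the
eigenvalues `μ > 0` of `M`. Equality forces every eigenvalue to be `1`, so `M = 1` and `A = B`.
Hence the number lies in `(0, 1]` and equals `1` exactly when `Σ₁ = Σ₂`, and so does its `L`-th
power.
-/

open Matrix ComplexOrder

lemma Finset.prod_eq_prod_iff_of_le_of_pos {ι R : Type*} [CommMonoidWithZero R] [PartialOrder R]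
    [ZeroLEOneClass R] [PosMulStrictMono R] [Nontrivial R] {s : Finset ι} {f g : ι → R}
    (hf : ∀ i ∈ s, 0 < f i) (hfg : ∀ i ∈ s, f i ≤ g i) :
    ∏ i ∈ s, f i = ∏ i ∈ s, g i ↔ ∀ i ∈ s, f i = g i := by
  refine ⟨fun h => ?_, Finset.prod_congr rfl⟩
  by_contra! ⟨i, hi, hne⟩
  exact (Finset.prod_lt_prod hf hfg ⟨i, hi, (hfg i hi).lt_of_ne hne⟩).ne h

lemma le_sq_half_one_add (x : ℝ) : x ≤ ((1 + x) / 2) ^ 2 := by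
  nlinarith [sq_nonneg (x - 1)]

lemma eq_sq_half_one_add_iff {x : ℝ} : x = ((1 + x) / 2) ^ 2 ↔ x = 1 := by
  rw [← sub_eq_zero, show x - ((1 + x) / 2) ^ 2 = -((x - 1) / 2) ^ 2 by ring]
  simp [sub_eq_zero]

namespace Matrix
variable {n 𝕜 : Type*} [Fintype n] [DecidableEq n] [RCLike 𝕜] {A B : Matrix n n 𝕜}

lemma IsHermitian.det_cfc (hA : A.IsHermitian) (f : ℝ → ℝ) :
    (cfc f A).det = ∏ i, (f (hA.eigenvalues i) : 𝕜) := by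
  simp [hA.cfc_eq, IsHermitian.cfc, -Unitary.conjStarAlgAut_apply]

lemma IsHermitian.cfc_half_one_add (hA : A.IsHermitian) :
    cfc (fun x : ℝ => (1 + x) / 2) A = (2⁻¹ : 𝕜) • (1 + A) := by
  have hA' : IsSelfAdjoint A := hA
  calc cfc (fun x : ℝ => (1 + x) / 2) A = cfc (fun x : ℝ => 2⁻¹ * (1 + x)) A := by
        congr 1; ext; ring
    _ = (2⁻¹ : ℝ) • (1 + A) := by
        rw [cfc_const_mul (2⁻¹ : ℝ) (fun x => 1 + x) A, cfc_const_add (1 : ℝ) (fun x => x) A,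
          cfc_id' ℝ A, map_one]
    _ = (2⁻¹ : 𝕜) • (1 + A) := by
        rw [RCLike.real_smul_eq_coe_smul (K := 𝕜), RCLike.ofReal_inv, RCLike.ofReal_ofNat]

lemma IsHermitian.det_half_one_add_sq (hA : A.IsHermitian) :
    ((2⁻¹ : 𝕜) • (1 + A)).det ^ 2 = ((∏ i, ((1 + hA.eigenvalues i) / 2) ^ 2 : ℝ) : 𝕜) := by
  rw [← hA.cfc_half_one_add, hA.det_cfc, ← Finset.prod_pow, RCLike.ofReal_prod]
  simp

lemma IsHermitian.det_eq_ofReal_prod_eigenvalues (hA : A.IsHermitian) :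
    A.det = ((∏ i, hA.eigenvalues i : ℝ) : 𝕜) := by
  rw [hA.det_eq_prod_eigenvalues, RCLike.ofReal_prod]

lemma IsHermitian.eq_one_of_eigenvalues_eq_one (hA : A.IsHermitian)
    (h : ∀ i, hA.eigenvalues i = 1) : A = 1 := by
  rw [hA.spectral_theorem]
  simp [Function.comp_def, h]

lemma PosDef.det_le_det_half_one_add_sq (hA : A.PosDef) :
    A.det ≤ ((2⁻¹ : 𝕜) • (1 + A)).det ^ 2 := by
  rw [hA.1.det_half_one_add_sq, hA.1.det_eq_ofReal_prod_eigenvalues, RCLike.ofReal_le_ofReal]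
  exact Finset.prod_le_prod (fun i _ => (hA.eigenvalues_pos i).le)
    fun i _ => le_sq_half_one_add _

lemma PosDef.eq_one_of_det_eq_det_half_one_add_sq (hA : A.PosDef)
    (h : A.det = ((2⁻¹ : 𝕜) • (1 + A)).det ^ 2) : A = 1 := by
  rw [hA.1.det_half_one_add_sq, hA.1.det_eq_ofReal_prod_eigenvalues, RCLike.ofReal_inj,
    Finset.prod_eq_prod_iff_of_le_of_pos (fun i _ => hA.eigenvalues_pos i)
      fun i _ => le_sq_half_one_add _] at h
  exact hA.1.eq_one_of_eigenvalues_eq_one fun i =>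
    eq_sq_half_one_add_iff.1 (h i (Finset.mem_univ i))

open scoped MatrixOrder in
lemma PosDef.exists_simultaneous_congruence (hA : A.PosDef) (hB : B.PosDef) :
    ∃ R M : Matrix n n 𝕜, M.PosDef ∧ A = star R * R ∧ B = star R * M * R := by
  obtain ⟨R, hR, rfl⟩ := CStarAlgebra.isStrictlyPositive_iff_eq_star_mul_self.mp
    hA.isStrictlyPositive
  have hRdet := (isUnit_iff_isUnit_det R).1 hR
  refine ⟨R, star R⁻¹ * B * R⁻¹, ?_, rfl, ?_⟩
  · exact (isUnit_nonsing_inv_iff.2 hR).posDef_star_left_conjugate_iff.2 hB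
  · have hstar : star R * star R⁻¹ = 1 := by rw [← star_mul, nonsing_inv_mul R hRdet, star_one]
    rw [← mul_assoc, ← mul_assoc, hstar, one_mul, mul_assoc, nonsing_inv_mul R hRdet, mul_one]

lemma det_star_mul_mul (R X : Matrix n n 𝕜) :
    (star R * X * R).det = (star R * R).det * X.det := by
  simp only [det_mul]; ring

lemma det_half_smul_star_mul_add (R M : Matrix n n 𝕜) :
    ((2⁻¹ : 𝕜) • (star R * R + star R * M * R)).det =
      (star R * R).det * ((2⁻¹ : 𝕜) • (1 + M)).det := by
  rw [← det_star_mul_mul]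
  congr 1
  simp only [Matrix.mul_add, Matrix.add_mul, Matrix.mul_one, Matrix.mul_smul, Matrix.smul_mul]

lemma PosDef.det_mul_det_le_det_half_add_sq (hA : A.PosDef) (hB : B.PosDef) :
    A.det * B.det ≤ ((2⁻¹ : 𝕜) • (A + B)).det ^ 2 := by
  have hc := hA.det_pos
  obtain ⟨R, M, hM, rfl, rfl⟩ := hA.exists_simultaneous_congruence hB
  rw [det_half_smul_star_mul_add, det_star_mul_mul]
  set c := (star R * R).det
  calc c * (c * M.det) = c ^ 2 * M.det := by ring
    _ ≤ c ^ 2 * ((2⁻¹ : 𝕜) • (1 + M)).det ^ 2 :=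
      mul_le_mul_of_nonneg_left hM.det_le_det_half_one_add_sq (pow_pos hc 2).le
    _ = _ := by ring

lemma PosDef.det_mul_det_eq_det_half_add_sq_iff (hA : A.PosDef) (hB : B.PosDef) :
    A.det * B.det = ((2⁻¹ : 𝕜) • (A + B)).det ^ 2 ↔ A = B := by
  refine ⟨fun h => ?_, ?_⟩
  · have hc := hA.det_pos
    obtain ⟨R, M, hM, rfl, rfl⟩ := hA.exists_simultaneous_congruence hB
    rw [det_half_smul_star_mul_add, det_star_mul_mul] at h
    set c := (star R * R).det
    have hdet : M.det = ((2⁻¹ : 𝕜) • (1 + M)).det ^ 2 :=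
      mul_left_cancel₀ (pow_pos hc 2).ne' (by linear_combination h)
    rw [hM.eq_one_of_det_eq_det_half_one_add_sq hdet, mul_one]
  · rintro rfl
    rw [← two_smul 𝕜 A, smul_smul, inv_mul_cancel₀ two_ne_zero, one_smul, sq]

end Matrix

namespace Matrix.PosDef
variable {m : ℕ} {A B : Matrix (Fin m) (Fin m) ℂ}

lemma ofReal_pdet (hA : A.PosDef) : (pdet A : ℂ) = A.det :=
  (Complex.eq_re_of_ofReal_le (r := 0) (by simpa using hA.det_pos.le)).symm

lemma pdet_pos (hA : A.PosDef) : 0 < pdet A :=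
  (Complex.pos_iff.1 hA.det_pos).1

lemma pdet_inv (hA : A.PosDef) : pdet A⁻¹ = (pdet A)⁻¹ := by
  rw [pdet, det_nonsing_inv, Ring.inverse_eq_inv', ← hA.ofReal_pdet, ← Complex.ofReal_inv,
    Complex.ofReal_re]

lemma half_smul_add (hA : A.PosDef) (hB : B.PosDef) : ((2⁻¹ : ℂ) • (A + B)).PosDef :=
  (hA.add hB).smul (by norm_num)

lemma pdet_mul_pdet_le_pdet_half_add_sq (hA : A.PosDef) (hB : B.PosDef) :
    pdet A * pdet B ≤ pdet ((2⁻¹ : ℂ) • (A + B)) ^ 2 := by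
  rw [← Complex.real_le_real]
  push_cast
  rw [hA.ofReal_pdet, hB.ofReal_pdet, (hA.half_smul_add hB).ofReal_pdet]
  exact hA.det_mul_det_le_det_half_add_sq hB

lemma pdet_mul_pdet_eq_pdet_half_add_sq_iff (hA : A.PosDef) (hB : B.PosDef) :
    pdet A * pdet B = pdet ((2⁻¹ : ℂ) • (A + B)) ^ 2 ↔ A = B := by
  rw [← Complex.ofReal_inj]
  push_cast
  rw [hA.ofReal_pdet, hB.ofReal_pdet, (hA.half_smul_add hB).ofReal_pdet]
  exact hA.det_mul_det_eq_det_half_add_sq_iff hB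

end Matrix.PosDef

/-- The Hellinger affinity `∫ √(p₁ p₂)` of the two scaled Wishart laws with `L` looks is
`hellingerAffinity S₁ S₂ ^ L`. -/
noncomputable def hellingerAffinity {m : ℕ} (S₁ S₂ : Matrix (Fin m) (Fin m) ℂ) : ℝ :=
  pdet ((2 : ℂ)⁻¹ • (S₁⁻¹ + S₂⁻¹))⁻¹ / Real.sqrt (pdet S₁ * pdet S₂)

section hellingerAffinity
variable {m : ℕ} {S₁ S₂ : Matrix (Fin m) (Fin m) ℂ}

lemma hellingerAffinity_eq (h₁ : S₁.PosDef) (h₂ : S₂.PosDef) :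
    hellingerAffinity S₁ S₂ =
      Real.sqrt (pdet S₁⁻¹ * pdet S₂⁻¹) / pdet ((2 : ℂ)⁻¹ • (S₁⁻¹ + S₂⁻¹)) := by
  rw [hellingerAffinity, (h₁.inv.half_smul_add h₂.inv).pdet_inv, h₁.pdet_inv, h₂.pdet_inv,
    ← mul_inv, Real.sqrt_inv]
  ring

lemma hellingerAffinity_pos (h₁ : S₁.PosDef) (h₂ : S₂.PosDef) : 0 < hellingerAffinity S₁ S₂ := by
  rw [hellingerAffinity_eq h₁ h₂]
  exact div_pos (Real.sqrt_pos.2 (mul_pos h₁.inv.pdet_pos h₂.inv.pdet_pos))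
    (h₁.inv.half_smul_add h₂.inv).pdet_pos

lemma hellingerAffinity_le_one (h₁ : S₁.PosDef) (h₂ : S₂.PosDef) :
    hellingerAffinity S₁ S₂ ≤ 1 := by
  have hP := (h₁.inv.half_smul_add h₂.inv).pdet_pos
  rw [hellingerAffinity_eq h₁ h₂, div_le_one hP, Real.sqrt_le_left hP.le]
  exact h₁.inv.pdet_mul_pdet_le_pdet_half_add_sq h₂.inv

lemma hellingerAffinity_eq_one_iff (h₁ : S₁.PosDef) (h₂ : S₂.PosDef) :
    hellingerAffinity S₁ S₂ = 1 ↔ S₁ = S₂ := by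
  have hP := (h₁.inv.half_smul_add h₂.inv).pdet_pos
  rw [hellingerAffinity_eq h₁ h₂, div_eq_one_iff_eq hP.ne', Real.sqrt_eq_iff_eq_sq
    (mul_pos h₁.inv.pdet_pos h₂.inv.pdet_pos).le hP.le,
    h₁.inv.pdet_mul_pdet_eq_pdet_half_add_sq_iff h₂.inv]
  exact ⟨fun h => inv_inj h ((isUnit_iff_isUnit_det _).1 h₁.isUnit), congrArg _⟩

end hellingerAffinity

theorem stmt6_general (m : ℕ) (L : ℝ) (hL : 0 < L)
    (S₁ S₂ : Matrix (Fin m) (Fin m) ℂ) (h₁ : S₁.PosDef) (h₂ : S₂.PosDef)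
    (dH : ℝ)
    (hdH : dH = 1 - (pdet (((2 : ℂ))⁻¹ • (S₁⁻¹ + S₂⁻¹))⁻¹
                      / Real.sqrt (pdet S₁ * pdet S₂)) ^ L) :
    0 ≤ dH ∧ dH < 1 ∧ (dH = 0 ↔ S₁ = S₂) := by
  change dH = 1 - hellingerAffinity S₁ S₂ ^ L at hdH
  have hρ := hellingerAffinity_pos h₁ h₂
  subst hdH
  refine ⟨sub_nonneg.2 (Real.rpow_le_one hρ.le (hellingerAffinity_le_one h₁ h₂) hL.le),
    sub_lt_self 1 (Real.rpow_pos_of_pos hρ L), ?_⟩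
  rw [sub_eq_zero, eq_comm, ← Real.one_rpow L, Real.rpow_left_inj hρ.le zero_le_one hL.ne',
    hellingerAffinity_eq_one_iff h₁ h₂]

theorem stmt6 (m : ℕ) (hm : 1 ≤ m) (L : ℝ) (hL : 0 < L)
    (S₁ S₂ : Matrix (Fin m) (Fin m) ℂ) (h₁ : S₁.PosDef) (h₂ : S₂.PosDef)
    (dH : ℝ)
    (hdH : dH = 1 - (pdet (((2 : ℂ))⁻¹ • (S₁⁻¹ + S₂⁻¹))⁻¹
                      / Real.sqrt (pdet S₁ * pdet S₂)) ^ L) :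
    0 ≤ dH ∧ dH < 1 ∧ (dH = 0 ↔ S₁ = S₂) :=
  stmt6_general m L hL S₁ S₂ h₁ h₂ dH hdH
end

section
/- Let L > 0 and σ₁², σ₂² > 0 be real numbers, and let f₁(z) = f(z;σ₁²,L) and f₂(z) = f(z;σ₂²,L) be the corresponding gamma densities. Then the symmetrized Kullback–Leibler distance satisfies (1/2)·∫₀^∞ (f₁(z) − f₂(z))·(log f₁(z) − log f₂(z)) dz = L·[ (σ₁²/σ₂² + σ₂²/σ₁²)/2 − 1 ], in agreement with the single-channel (m = 1) case of the closed-form Kullback–Leibler distance d_KL(Σ₁,Σ₂) = L·[Re tr(Σ₁⁻¹Σ₂ + Σ₂⁻¹Σ₁)/2 − m] between scaled complex Wishart laws. -/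
open MeasureTheory

/-- Single-channel (m = 1) scaled Wishart density: the gamma density with shape `L`
and rate `L/σ²`, i.e. `f(z;σ²,L) = L^L z^{L−1} exp(−Lz/σ²) / (σ^{2L} Γ(L))`. -/
noncomputable def gdens (L s2 : ℝ) (z : ℝ) : ℝ :=
  L ^ L * z ^ (L - 1) * Real.exp (-(L * z / s2)) / (s2 ^ L * Real.Gamma L)

/-! The log-ratio of two gamma densities with the same shape `L` is affine in `z`, so the
symmetrized distance only involves the total mass `∫ f = 1` and the mean `∫ z f = σ²` of each
density: with `log f₁ − log f₂ = L (1/σ₂² − 1/σ₁²) z + const`, the distance is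
`(L/2) (1/σ₂² − 1/σ₁²) (σ₁² − σ₂²) = L ((σ₁²/σ₂² + σ₂²/σ₁²)/2 − 1)`. -/

open Set Real

lemma integrableOn_rpow_mul_exp_neg_mul_Ioi {s r : ℝ} (hs : -1 < s) (hr : 0 < r) :
    IntegrableOn (fun t : ℝ => t ^ s * exp (-(r * t))) (Ioi 0) := by
  refine (integrableOn_rpow_mul_exp_neg_mul_rpow hs one_pos hr).congr_fun (fun t _ => ?_)
    measurableSet_Ioi
  simp only [rpow_one, neg_mul]

section GammaDensity

variable {L s : ℝ}

lemma gdens_eq (L s z : ℝ) :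
    gdens L s z = L ^ L / (s ^ L * Gamma L) * (z ^ (L - 1) * exp (-((L / s) * z))) := by
  rw [gdens, div_mul_eq_mul_div L s z]
  ring

lemma mul_gdens_eq {z : ℝ} (hz : 0 < z) :
    z * gdens L s z = L ^ L / (s ^ L * Gamma L) * (z ^ (L + 1 - 1) * exp (-((L / s) * z))) := by
  rw [gdens_eq, add_sub_cancel_right, rpow_sub_one hz.ne']
  field_simp

lemma integrableOn_gdens (hL : 0 < L) (hs : 0 < s) : IntegrableOn (gdens L s) (Ioi 0) := by
  simp_rw [funext (gdens_eq L s)]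
  exact (integrableOn_rpow_mul_exp_neg_mul_Ioi (by linarith) (div_pos hL hs)).const_mul _

lemma integrableOn_mul_gdens (hL : 0 < L) (hs : 0 < s) :
    IntegrableOn (fun z => z * gdens L s z) (Ioi 0) :=
  IntegrableOn.congr_fun
    ((integrableOn_rpow_mul_exp_neg_mul_Ioi (by linarith) (div_pos hL hs)).const_mul _)
    (fun _ hz => (mul_gdens_eq hz).symm) measurableSet_Ioi

lemma integrableOn_affine_mul_gdens (hL : 0 < L) (hs : 0 < s) (a b : ℝ) :
    IntegrableOn (fun z => (a * z + b) * gdens L s z) (Ioi 0) := by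
  simp_rw [add_mul, mul_assoc]
  exact ((integrableOn_mul_gdens hL hs).const_mul a).add ((integrableOn_gdens hL hs).const_mul b)

lemma integral_gdens (hL : 0 < L) (hs : 0 < s) : ∫ z in Ioi 0, gdens L s z = 1 := by
  simp_rw [gdens_eq]
  rw [integral_const_mul, integral_rpow_mul_exp_neg_mul_Ioi hL (div_pos hL hs), one_div_div,
    div_rpow hs.le hL.le]
  have := Gamma_pos_of_pos hL
  field_simp

lemma integral_mul_gdens (hL : 0 < L) (hs : 0 < s) : ∫ z in Ioi 0, z * gdens L s z = s := by
  rw [setIntegral_congr_fun measurableSet_Ioi (fun _ hz => mul_gdens_eq hz), integral_const_mul,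
    integral_rpow_mul_exp_neg_mul_Ioi (by linarith) (div_pos hL hs), one_div_div,
    div_rpow hs.le hL.le, Gamma_add_one hL.ne', rpow_add_one hL.ne', rpow_add_one hs.ne']
  have := Gamma_pos_of_pos hL
  have := rpow_pos_of_pos hL L
  have := rpow_pos_of_pos hs L
  field_simp

lemma integral_affine_mul_gdens (hL : 0 < L) (hs : 0 < s) (a b : ℝ) :
    ∫ z in Ioi 0, (a * z + b) * gdens L s z = a * s + b := by
  simp_rw [add_mul, mul_assoc]
  rw [integral_add ((integrableOn_mul_gdens hL hs).const_mul a)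
      ((integrableOn_gdens hL hs).const_mul b),
    integral_const_mul, integral_const_mul, integral_mul_gdens hL hs, integral_gdens hL hs,
    mul_one]

lemma log_gdens (hL : 0 < L) (hs : 0 < s) {z : ℝ} (hz : 0 < z) :
    log (gdens L s z) = L * log L + (L - 1) * log z - L * z / s - L * log s - log (Gamma L) := by
  have := Gamma_pos_of_pos hL
  rw [gdens, log_div (by positivity) (by positivity), log_mul (by positivity) (by positivity),
    log_mul (by positivity) (by positivity), log_mul (by positivity) (by positivity),
    log_rpow hL, log_rpow hz, log_rpow hs, log_exp]
  ring

lemma log_gdens_sub_log_gdens (hL : 0 < L) {s₁ s₂ : ℝ} (h₁ : 0 < s₁) (h₂ : 0 < s₂) {z : ℝ}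
    (hz : 0 < z) :
    log (gdens L s₁ z) - log (gdens L s₂ z) =
      L * (1 / s₂ - 1 / s₁) * z + L * (log s₂ - log s₁) := by
  rw [log_gdens hL h₁ hz, log_gdens hL h₂ hz]
  ring

end GammaDensity

theorem stmt11 (L s1 s2 : ℝ) (hL : 0 < L) (h1 : 0 < s1) (h2 : 0 < s2) :
    (1 / 2) * (∫ z in Set.Ioi (0 : ℝ),
        (gdens L s1 z - gdens L s2 z) * (Real.log (gdens L s1 z) - Real.log (gdens L s2 z)))
      = L * ((s1 / s2 + s2 / s1) / 2 - 1) := by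
  have h_integrand : ∀ z ∈ Ioi (0 : ℝ),
      (gdens L s1 z - gdens L s2 z) * (log (gdens L s1 z) - log (gdens L s2 z)) =
        (L * (1 / s2 - 1 / s1) * z + L * (log s2 - log s1)) * gdens L s1 z
          - (L * (1 / s2 - 1 / s1) * z + L * (log s2 - log s1)) * gdens L s2 z := fun z hz => by
    rw [log_gdens_sub_log_gdens hL h1 h2 hz]
    ring
  rw [setIntegral_congr_fun measurableSet_Ioi h_integrand,
    integral_sub (integrableOn_affine_mul_gdens hL h1 _ _)
      (integrableOn_affine_mul_gdens hL h2 _ _),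
    integral_affine_mul_gdens hL h1, integral_affine_mul_gdens hL h2]
  field_simp
  ring
end
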